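/- Let m, n be positive integers and h a norm on ℝ^m with generated norm H on ℝ^{m×n}. Let F be a compactly supported finite ℝ^{m×n}-valued Borel measure on ℝ^n and F_0 a compactly supported finite ℝ^m-valued Borel measure on ℝ^n with ∂F = F_0. Then for every admissible dual potential φ : ℝ^n → ℝ^m one has ∫ φ · dF_0 ≤ |F|_H. -/

import Mathlib

open MeasureTheory

noncomputable section

/-- `ℝ^n` with the Euclidean norm. -/
abbrev Euc (n : ℕ) := EuclideanSpace ℝ (Fin n)

/-- `h` is a norm on `ℝ^m`. -/
def IsNorm {m : ℕ} (h : (Fin m → ℝ) → ℝ) : Prop :=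
  (∀ x y, h (x + y) ≤ h x + h y) ∧ (∀ (c : ℝ) (x), h (c • x) = |c| * h x) ∧
    ∀ x, h x = 0 → x = 0

/-- The dual norm `h_*` of `h`: `h_*(g) = sup { g·θ : h θ ≤ 1 }`. -/
def dualNorm {m : ℕ} (h : (Fin m → ℝ) → ℝ) (g : Fin m → ℝ) : ℝ :=
  sSup {r | ∃ θ : Fin m → ℝ, h θ ≤ 1 ∧ r = ∑ i, g i * θ i}

/-- Matrix-vector product `M u`. -/
def matVec {m n : ℕ} (M : Fin m → Fin n → ℝ) (u : Euc n) : Fin m → ℝ :=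
  fun i => ∑ j, M i j * u j

/-- Frobenius inner product `M : N`. -/
def frob {m n : ℕ} (M N : Fin m → Fin n → ℝ) : ℝ := ∑ i, ∑ j, M i j * N i j

/-- `M ∈ ∂H(0)`, i.e. `h_*(M u) ≤ 1` for all `|u| ≤ 1`. -/
def inSubdiffH {m n : ℕ} (h : (Fin m → ℝ) → ℝ) (M : Fin m → Fin n → ℝ) : Prop :=
  ∀ u : Euc n, ‖u‖ ≤ 1 → dualNorm h (matVec M u) ≤ 1

/-- The norm `H` on `ℝ^{m×n}` generated by `h`:
`H(N) = sup { M:N : M ∈ ∂H(0) }`. -/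
def genNorm {m n : ℕ} (h : (Fin m → ℝ) → ℝ) (N : Fin m → Fin n → ℝ) : ℝ :=
  sSup {r | ∃ M : Fin m → Fin n → ℝ, inSubdiffH h M ∧ r = frob M N}

/-- The rank-one matrix `θ ⊗ e`. -/
def outer {m n : ℕ} (θ : Fin m → ℝ) (e : Euc n) : Fin m → Fin n → ℝ :=
  fun i j => θ i * e j

/-- An `ℝ^{m×n}`-valued Borel measure on `ℝ^n`, given by its component signed measures. -/
abbrev MatMeas (m n : ℕ) := Fin m → Fin n → MeasureTheory.SignedMeasure (Euc n)

/-- An `ℝ^m`-valued Borel measure on `ℝ^n`, given by its component signed measures. -/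
abbrev VecMeas (m n : ℕ) := Fin m → MeasureTheory.SignedMeasure (Euc n)

/-- Integral of a function against a signed measure (via the Jordan decomposition). -/
def sInt {n : ℕ} (ν : MeasureTheory.SignedMeasure (Euc n)) (f : Euc n → ℝ) : ℝ :=
  ∫ x, f x ∂ν.toJordanDecomposition.posPart - ∫ x, f x ∂ν.toJordanDecomposition.negPart

/-- The total variation `|F|_H` of `F` with respect to the norm `H` generated by `h`:
the supremum of `Σ_k H(F(B_k))` over countable Borel partitions `(B_k)` of `ℝ^n`. -/
def tvH {m n : ℕ} (h : (Fin m → ℝ) → ℝ) (F : MatMeas m n) : ℝ :=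
  sSup {r | ∃ B : ℕ → Set (Euc n), (∀ k, MeasurableSet (B k)) ∧
    Pairwise (Function.onFun Disjoint B) ∧ (⋃ k, B k) = Set.univ ∧
    r = ∑' k, genNorm h (fun i j => F i j (B k))}

/-- `F` is supported in `K`: it vanishes on Borel sets disjoint from `K`. -/
def suppIn {m n : ℕ} (F : MatMeas m n) (K : Set (Euc n)) : Prop :=
  ∀ B : Set (Euc n), MeasurableSet B → Disjoint B K → ∀ i j, F i j B = 0

/-- `F` is compactly supported. -/
def suppInCpt {m n : ℕ} (F : MatMeas m n) : Prop :=
  ∃ K : Set (Euc n), IsCompact K ∧ suppIn F K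

/-- `F₀` is compactly supported. -/
def vSuppInCpt {m n : ℕ} (F0 : VecMeas m n) : Prop :=
  ∃ K : Set (Euc n), IsCompact K ∧
    ∀ B : Set (Euc n), MeasurableSet B → Disjoint B K → ∀ i, F0 i B = 0

/-- The Jacobian matrix `Dψ(x) ∈ ℝ^{m×n}` of `ψ : ℝ^n → ℝ^m`. -/
def jac {m n : ℕ} (ψ : Euc n → (Fin m → ℝ)) (x : Euc n) : Fin m → Fin n → ℝ :=
  fun i j => fderiv ℝ ψ x (EuclideanSpace.single j 1) i

/-- `∂F = F₀`, i.e. `∫ Dψ : dF = ∫ ψ · dF₀` for all smooth compactly supported `ψ`. -/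
def isBoundary {m n : ℕ} (F : MatMeas m n) (F0 : VecMeas m n) : Prop :=
  ∀ ψ : Euc n → (Fin m → ℝ), ContDiff ℝ (⊤ : ℕ∞) ψ → HasCompactSupport ψ →
    (∑ i, ∑ j, sInt (F i j) fun x => jac ψ x i j) = ∑ i, sInt (F0 i) fun x => ψ x i

/-- `φ` is an admissible dual potential: `h_*(φ(y) - φ(x)) ≤ |y - x|`. -/
def admissible {m n : ℕ} (h : (Fin m → ℝ) → ℝ) (φ : Euc n → Fin m → ℝ) : Prop :=
  ∀ x y : Euc n, dualNorm h (φ y - φ x) ≤ ‖y - x‖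

/-- The dual objective `∫ φ · dF₀`. -/
def intDual {m n : ℕ} (F0 : VecMeas m n) (φ : Euc n → Fin m → ℝ) : ℝ :=
  ∑ i, sInt (F0 i) fun x => φ x i

/-!
Mollify `φ` componentwise at scale `ε`. By admissibility every pairing `x ↦ φ x ⬝ᵥ θ` with
`h θ ≤ 1` is `1`-Lipschitz; mollification preserves this, so the Jacobian of the mollified
potential `Φ` lies in `∂H(0)` everywhere, while `|Φ - φ| = O(ε)`. Cutting `Φ` off away from the
supports gives a test field `ψ`, and `∫ φ · dF₀ ≈ ∫ ψ · dF₀ = ∫ Dψ : dF = ∫ DΦ : dF`.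
Finally, for a continuous field `G` with values in `∂H(0)`, approximating `G` on the support of
`F` by a step function over a fine Borel partition `(B k)` with sample points `c k` gives
`∫ G : dF ≈ ∑ₖ G (c k) : F (B k) ≤ ∑ₖ H (F (B k)) ≤ |F|_H`.
-/

namespace IsNorm

variable {m : ℕ} {h : (Fin m → ℝ) → ℝ}

lemma map_add_le_add (hh : IsNorm h) (x y : Fin m → ℝ) : h (x + y) ≤ h x + h y := hh.1 x y

lemma map_smul_eq_mul (hh : IsNorm h) (c : ℝ) (x : Fin m → ℝ) : h (c • x) = |c| * h x := hh.2.1 c x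

lemma eq_zero_of_map_eq_zero (hh : IsNorm h) {x : Fin m → ℝ} (hx : h x = 0) : x = 0 := hh.2.2 x hx

lemma map_zero (hh : IsNorm h) : h 0 = 0 := by simpa using hh.map_smul_eq_mul 0 0

lemma map_neg_eq_map (hh : IsNorm h) (x : Fin m → ℝ) : h (-x) = h x := by
  simpa using hh.map_smul_eq_mul (-1) x

lemma nonneg (hh : IsNorm h) (x : Fin m → ℝ) : 0 ≤ h x := by
  have := hh.map_add_le_add x (-x)
  rw [add_neg_cancel, hh.map_zero, hh.map_neg_eq_map] at this
  linarith

lemma le_sum_mul_norm (hh : IsNorm h) (x : Fin m → ℝ) :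
    h x ≤ (∑ i, h (Pi.single i 1)) * ‖x‖ := by
  have hsum : ∀ s : Finset (Fin m), h (∑ i ∈ s, x i • Pi.single i 1) ≤
      ∑ i ∈ s, |x i| * h (Pi.single i 1) := by
    intro s
    induction s using Finset.cons_induction with
    | empty => simp [hh.map_zero]
    | cons a s ha ih =>
      rw [Finset.sum_cons, Finset.sum_cons, ← hh.map_smul_eq_mul]
      exact (hh.map_add_le_add _ _).trans (by linarith)
  calc h x = h (∑ i, x i • Pi.single i 1) := by
        congr 1; ext j; simp [Finset.sum_apply, Pi.single_apply]
    _ ≤ ∑ i, |x i| * h (Pi.single i 1) := hsum _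
    _ ≤ ∑ i, ‖x‖ * h (Pi.single i 1) := by
        gcongr with i
        · exact hh.nonneg _
        · exact norm_le_pi_norm x i
    _ = (∑ i, h (Pi.single i 1)) * ‖x‖ := by rw [Finset.sum_mul]; simp_rw [mul_comm]

lemma continuous (hh : IsNorm h) : Continuous h := by
  refine (LipschitzWith.of_dist_le_mul (K := (∑ i, h (Pi.single i 1)).toNNReal)
    fun x y => ?_).continuous
  have hxy : h x ≤ h (x - y) + h y := by simpa using hh.map_add_le_add (x - y) y
  have hyx : h y ≤ h (x - y) + h x := by
    have := hh.map_add_le_add (y - x) x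
    rwa [sub_add_cancel, ← neg_sub, hh.map_neg_eq_map] at this
  rw [Real.dist_eq, dist_eq_norm, Real.coe_toNNReal _ (Finset.sum_nonneg fun i _ => hh.nonneg _)]
  exact abs_sub_le_iff.2 ⟨by linarith [hh.le_sum_mul_norm (x - y)],
    by linarith [hh.le_sum_mul_norm (x - y)]⟩

lemma exists_pos_mul_norm_le (hh : IsNorm h) : ∃ c > 0, ∀ x, c * ‖x‖ ≤ h x := by
  rcases subsingleton_or_nontrivial (Fin m → ℝ) with _ | _
  · exact ⟨1, one_pos, fun x => by simp [Subsingleton.elim x 0, hh.map_zero]⟩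
  obtain ⟨x₀, hx₀S, hmin⟩ := (isCompact_sphere (0 : Fin m → ℝ) 1).exists_isMinOn
    (NormedSpace.sphere_nonempty.2 zero_le_one) hh.continuous.continuousOn
  have hx₀ : ‖x₀‖ = 1 := by simpa using hx₀S
  have hc : 0 < h x₀ := (hh.nonneg x₀).lt_of_ne fun h0 => by
    simp [hh.eq_zero_of_map_eq_zero h0.symm] at hx₀
  refine ⟨h x₀, hc, fun x => ?_⟩
  rcases eq_or_ne x 0 with rfl | hx
  · simp [hh.map_zero]
  have hxpos : 0 < ‖x‖ := norm_pos_iff.2 hx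
  have : h x₀ ≤ h (‖x‖⁻¹ • x) := hmin (show ‖x‖⁻¹ • x ∈ Metric.sphere (0 : Fin m → ℝ) 1 by
    simp [norm_smul, hxpos.ne'])
  rw [hh.map_smul_eq_mul, abs_of_pos (inv_pos.2 hxpos)] at this
  rwa [le_inv_mul_iff₀ hxpos, mul_comm] at this

end IsNorm

section DualNorm

variable {m : ℕ} {h : (Fin m → ℝ) → ℝ}

lemma dualNorm_bddAbove (hh : IsNorm h) (g : Fin m → ℝ) :
    BddAbove {r | ∃ θ : Fin m → ℝ, h θ ≤ 1 ∧ r = ∑ i, g i * θ i} := by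
  obtain ⟨c, hc, hlow⟩ := hh.exists_pos_mul_norm_le
  refine ⟨(∑ i, |g i|) * (1 / c), ?_⟩
  rintro r ⟨θ, hθ, rfl⟩
  have hθc : ‖θ‖ ≤ 1 / c := (le_div_iff₀' hc).2 ((hlow θ).trans hθ)
  rw [Finset.sum_mul]
  refine Finset.sum_le_sum fun i _ => ?_
  calc g i * θ i ≤ |g i| * |θ i| := by rw [← abs_mul]; exact le_abs_self _
    _ ≤ |g i| * (1 / c) := by gcongr; exact (norm_le_pi_norm θ i).trans hθc

lemma dotProduct_le_dualNorm (hh : IsNorm h) (g : Fin m → ℝ) {θ : Fin m → ℝ} (hθ : h θ ≤ 1) :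
    g ⬝ᵥ θ ≤ dualNorm h g :=
  le_csSup (dualNorm_bddAbove hh g) ⟨θ, hθ, rfl⟩

lemma dualNorm_le {g : Fin m → ℝ} {r : ℝ} (hr : 0 ≤ r) (hg : ∀ θ, h θ ≤ 1 → g ⬝ᵥ θ ≤ r) :
    dualNorm h g ≤ r :=
  Real.sSup_le (by rintro _ ⟨θ, hθ, rfl⟩; exact hg θ hθ) hr

lemma dotProduct_le_mul_dualNorm (hh : IsNorm h) (g θ : Fin m → ℝ) :
    g ⬝ᵥ θ ≤ h θ * dualNorm h g := by
  rcases (hh.nonneg θ).eq_or_lt with hθ | hθ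
  · simp [hh.eq_zero_of_map_eq_zero hθ.symm, hh.map_zero]
  have hunit : h ((h θ)⁻¹ • θ) ≤ 1 := by
    rw [hh.map_smul_eq_mul, abs_of_pos (inv_pos.2 hθ), inv_mul_cancel₀ hθ.ne']
  have := dotProduct_le_dualNorm hh g hunit
  rwa [dotProduct_smul, smul_eq_mul, inv_mul_le_iff₀ hθ] at this

lemma abs_dotProduct_le_mul_dualNorm (hh : IsNorm h) (g θ : Fin m → ℝ) :
    |g ⬝ᵥ θ| ≤ h θ * dualNorm h g := by
  refine abs_le.2 ⟨?_, dotProduct_le_mul_dualNorm hh g θ⟩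
  have := dotProduct_le_mul_dualNorm hh g (-θ)
  rw [dotProduct_neg, hh.map_neg_eq_map] at this
  linarith

end DualNorm

section GenNorm

variable {m n : ℕ} {h : (Fin m → ℝ) → ℝ}

lemma matVec_single (M : Fin m → Fin n → ℝ) (j : Fin n) :
    matVec M (EuclideanSpace.single j 1) = fun i => M i j := by
  ext i
  simp [matVec, PiLp.single_apply]

lemma inSubdiffH_zero : inSubdiffH h (0 : Fin m → Fin n → ℝ) :=
  fun u _ => dualNorm_le zero_le_one fun θ _ => by simp [matVec, dotProduct]

lemma abs_le_of_inSubdiffH (hh : IsNorm h) {M : Fin m → Fin n → ℝ} (hM : inSubdiffH h M)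
    (i : Fin m) (j : Fin n) : |M i j| ≤ h (Pi.single i 1) := by
  have hcol := hM (EuclideanSpace.single j 1) (by simp)
  rw [matVec_single] at hcol
  calc |M i j| = |(fun i => M i j) ⬝ᵥ Pi.single i 1| := by rw [dotProduct_single, mul_one]
    _ ≤ h (Pi.single i 1) * 1 :=
        (abs_dotProduct_le_mul_dualNorm hh _ _).trans (by gcongr; exact hh.nonneg _)
    _ = h (Pi.single i 1) := mul_one _

lemma frob_le_of_inSubdiffH (hh : IsNorm h) {M : Fin m → Fin n → ℝ} (hM : inSubdiffH h M)
    (N : Fin m → Fin n → ℝ) : frob M N ≤ ∑ i, ∑ j, h (Pi.single i 1) * |N i j| := by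
  refine Finset.sum_le_sum fun i _ => Finset.sum_le_sum fun j _ => ?_
  calc M i j * N i j ≤ |M i j| * |N i j| := by rw [← abs_mul]; exact le_abs_self _
    _ ≤ h (Pi.single i 1) * |N i j| := by gcongr; exact abs_le_of_inSubdiffH hh hM i j

lemma frob_le_genNorm (hh : IsNorm h) {M : Fin m → Fin n → ℝ} (hM : inSubdiffH h M)
    (N : Fin m → Fin n → ℝ) : frob M N ≤ genNorm h N :=
  le_csSup ⟨_, by rintro _ ⟨M', hM', rfl⟩; exact frob_le_of_inSubdiffH hh hM' N⟩ ⟨M, hM, rfl⟩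

lemma genNorm_nonneg (hh : IsNorm h) (N : Fin m → Fin n → ℝ) : 0 ≤ genNorm h N := by
  simpa [frob] using frob_le_genNorm hh inSubdiffH_zero N

lemma genNorm_le_sum_abs (hh : IsNorm h) (N : Fin m → Fin n → ℝ) :
    genNorm h N ≤ ∑ i, ∑ j, h (Pi.single i 1) * |N i j| :=
  Real.sSup_le (by rintro _ ⟨M, hM, rfl⟩; exact frob_le_of_inSubdiffH hh hM N)
    (Finset.sum_nonneg fun i _ => Finset.sum_nonneg fun j _ =>
      mul_nonneg (hh.nonneg _) (abs_nonneg _))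

lemma genNorm_zero (hh : IsNorm h) : genNorm h (0 : Fin m → Fin n → ℝ) = 0 :=
  (genNorm_le_sum_abs hh 0).trans_eq (by simp) |>.antisymm (genNorm_nonneg hh 0)

end GenNorm

section Partition

variable {α : Type*} [MeasurableSpace α]

def IsBorelPartition (B : ℕ → Set α) : Prop :=
  (∀ k, MeasurableSet (B k)) ∧ Pairwise (Function.onFun Disjoint B) ∧ (⋃ k, B k) = Set.univ

lemma IsBorelPartition.hasSum_measureReal {B : ℕ → Set α} (hB : IsBorelPartition B)
    (μ : Measure α) [IsFiniteMeasure μ] : HasSum (fun k => μ.real (B k)) (μ.real Set.univ) := by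
  have := μ.toSignedMeasure.m_iUnion hB.1 hB.2.1
  rwa [hB.2.2, Measure.toSignedMeasure_apply_measurable MeasurableSet.univ,
    funext fun k => Measure.toSignedMeasure_apply_measurable (hB.1 k)] at this

lemma IsCompact.exists_isBorelPartition_subset_ball [PseudoMetricSpace α]
    [TopologicalSpace.SeparableSpace α] [Nonempty α] [OpensMeasurableSpace α] {K : Set α}
    (hK : IsCompact K) {δ : ℝ} (hδ : 0 < δ) :
    ∃ (c : ℕ → α) (B : ℕ → Set α) (N : ℕ), IsBorelPartition B ∧
      (∀ k, B k ⊆ Metric.ball (c k) δ) ∧ ∀ k, N ≤ k → Disjoint (B k) K := by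
  obtain ⟨c, hc⟩ := TopologicalSpace.exists_dense_seq α
  have hcover : (⋃ k, Metric.ball (c k) δ) = Set.univ :=
    Set.eq_univ_of_forall fun x => Set.mem_iUnion.2 (by
      simpa [dist_comm] using Metric.denseRange_iff.1 hc x δ hδ)
  obtain ⟨s, hs⟩ := hK.elim_finite_subcover (fun k => Metric.ball (c k) δ)
    (fun _ => Metric.isOpen_ball) (hcover ▸ Set.subset_univ K)
  obtain ⟨N, hN⟩ := s.exists_nat_subset_range
  refine ⟨c, disjointed fun k => Metric.ball (c k) δ, N,
    ⟨MeasurableSet.disjointed fun _ => measurableSet_ball, disjoint_disjointed _,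
      iUnion_disjointed.trans hcover⟩, disjointed_subset _, fun k hk => ?_⟩
  refine Set.disjoint_right.2 fun x hx hxk => ?_
  obtain ⟨j, hj, hxj⟩ := Set.mem_iUnion₂.1 (hs hx)
  rw [disjointed_eq_inter_compl] at hxk
  exact Set.mem_iInter₂.1 hxk.2 j ((Finset.mem_range.1 (hN hj)).trans_le hk) hxj

end Partition

section SignedIntegral

variable {α : Type*} [MeasurableSpace α]

def VanishesOutside (ν : SignedMeasure α) (K : Set α) : Prop :=
  ∀ B, MeasurableSet B → Disjoint B K → ν B = 0

lemma VanishesOutside.ae_mem {ν : SignedMeasure α} {K : Set α} (hK : MeasurableSet K)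
    (hν : VanishesOutside ν K) : ∀ᵐ x ∂ν.totalVariation, x ∈ K := by
  obtain ⟨i, hi, hpos, hneg, hposPart, hnegPart⟩ := ν.toJordanDecomposition_spec
  have hzero : ∀ j, MeasurableSet j → ν (j ∩ Kᶜ) = 0 := fun j hj =>
    hν _ (hj.inter hK.compl) (Set.disjoint_left.2 fun _ hx => hx.2)
  rw [ae_iff]
  change ν.totalVariation Kᶜ = 0
  rw [SignedMeasure.totalVariation, Measure.add_apply, hposPart, hnegPart,
    SignedMeasure.toMeasureOfZeroLE_apply _ _ _ hK.compl, SignedMeasure.toMeasureOfLEZero,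
    SignedMeasure.toMeasureOfZeroLE_apply _ _ _ hK.compl]
  simp [hzero i hi, hzero iᶜ hi.compl]

lemma Continuous.integrable_of_ae_mem_compact [TopologicalSpace α] [OpensMeasurableSpace α]
    [T2Space α] {μ : Measure α} [IsFiniteMeasure μ] {f : α → ℝ} (hf : Continuous f)
    {K : Set α} (hK : IsCompact K) (hμ : ∀ᵐ x ∂μ, x ∈ K) : Integrable f μ := by
  rw [← Measure.restrict_eq_self_of_ae_mem hμ]
  exact hf.continuousOn.integrableOn_compact hK

end SignedIntegral

section SInt

variable {n : ℕ} {ν : SignedMeasure (Euc n)}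

lemma sInt_sub {f g : Euc n → ℝ} (hf : Integrable f ν.totalVariation)
    (hg : Integrable g ν.totalVariation) :
    sInt ν (fun x => f x - g x) = sInt ν f - sInt ν g := by
  obtain ⟨hf₁, hf₂⟩ := integrable_add_measure.1 hf
  obtain ⟨hg₁, hg₂⟩ := integrable_add_measure.1 hg
  simp only [sInt, integral_sub hf₁ hg₁, integral_sub hf₂ hg₂]
  ring

lemma sInt_congr_ae {f g : Euc n → ℝ} (hfg : f =ᵐ[ν.totalVariation] g) :
    sInt ν f = sInt ν g := by
  obtain ⟨h₁, h₂⟩ := ae_add_measure_iff.1 hfg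
  simp only [sInt, integral_congr_ae h₁, integral_congr_ae h₂]

lemma abs_sInt_le {f : Euc n → ℝ} {C : ℝ} (hf : ∀ᵐ x ∂ν.totalVariation, |f x| ≤ C) :
    |sInt ν f| ≤ C * ν.totalVariation.real Set.univ := by
  obtain ⟨h₁, h₂⟩ := ae_add_measure_iff.1 hf
  have e₁ := norm_integral_le_of_norm_le_const (f := f) (C := C) h₁
  have e₂ := norm_integral_le_of_norm_le_const (f := f) (C := C) h₂
  rw [Real.norm_eq_abs] at e₁ e₂
  rw [SignedMeasure.totalVariation, measureReal_add_apply]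
  calc |sInt ν f| ≤ |∫ x, f x ∂ν.toJordanDecomposition.posPart| +
        |∫ x, f x ∂ν.toJordanDecomposition.negPart| := abs_sub _ _
    _ ≤ _ := by rw [mul_add]; exact add_le_add e₁ e₂

lemma sInt_le_sInt_add {f g : Euc n → ℝ} (hf : Integrable f ν.totalVariation)
    (hg : Integrable g ν.totalVariation) {C : ℝ}
    (hfg : ∀ᵐ x ∂ν.totalVariation, |f x - g x| ≤ C) :
    sInt ν f ≤ sInt ν g + C * ν.totalVariation.real Set.univ := by
  have := (abs_le.1 (abs_sInt_le hfg)).2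
  rw [sInt_sub hf hg] at this
  linarith

lemma sInt_sum_indicator_const {B : ℕ → Set (Euc n)} (hB : ∀ k, MeasurableSet (B k))
    (s : Finset ℕ) (a : ℕ → ℝ) :
    sInt ν (fun x => ∑ k ∈ s, (B k).indicator (fun _ => a k) x) = ∑ k ∈ s, a k * ν (B k) := by
  have hint : ∀ (μ : Measure (Euc n)) [IsFiniteMeasure μ], ∀ k ∈ s,
      Integrable ((B k).indicator fun _ => a k) μ :=
    fun μ _ k _ => (integrable_const (a k)).indicator (hB k)
  simp only [sInt, integral_finsetSum _ (hint _), ← Finset.sum_sub_distrib,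
    integral_indicator_const _ (hB _), ν.apply_eq_posPart_real_sub_negPart_real (hB _),
    smul_eq_mul]
  exact Finset.sum_congr rfl fun k _ => by ring

lemma sInt_le_sum_add_of_isBorelPartition {K : Set (Euc n)} (hK : IsCompact K)
    (hν : VanishesOutside ν K) {f : Euc n → ℝ} (hf : Continuous f) {B : ℕ → Set (Euc n)}
    (hB : IsBorelPartition B) {N : ℕ} (hBK : ∀ k, N ≤ k → Disjoint (B k) K) (a : ℕ → ℝ)
    {ε : ℝ} (hfa : ∀ k, ∀ x ∈ K ∩ B k, |f x - a k| ≤ ε) :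
    sInt ν f ≤ ∑ k ∈ Finset.range N, a k * ν (B k) + ε * ν.totalVariation.real Set.univ := by
  set S : Euc n → ℝ := fun x => ∑ k ∈ Finset.range N, (B k).indicator (fun _ => a k) x
  have hS : ∀ x ∈ K, ∀ k, x ∈ B k → S x = a k := by
    intro x hxK k hxk
    have hkN : k < N := not_le.1 fun hk => Set.disjoint_left.1 (hBK k hk) hxk hxK
    simp only [S]
    rw [Finset.sum_eq_single_of_mem k (Finset.mem_range.2 hkN) fun k' _ hk' =>
      Set.indicator_of_notMem (Set.disjoint_left.1 (hB.2.1 hk'.symm) hxk) _,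
      Set.indicator_of_mem hxk]
  have hae := hν.ae_mem hK.isClosed.measurableSet
  calc sInt ν f ≤ sInt ν S + ε * ν.totalVariation.real Set.univ := by
        refine sInt_le_sInt_add (hf.integrable_of_ae_mem_compact hK hae)
          (integrable_finsetSum _ fun k _ => (integrable_const (a k)).indicator (hB.1 k))
          (hae.mono fun x hxK => ?_)
        obtain ⟨k, hxk⟩ := Set.mem_iUnion.1 (hB.2.2.symm ▸ Set.mem_univ x)
        have := hfa k x ⟨hxK, hxk⟩
        rwa [← hS x hxK k hxk] at this
    _ = _ := by rw [sInt_sum_indicator_const hB.1]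

end SInt

lemma IsCompact.exists_pos_forall_dist_lt {α β : Type*} [PseudoMetricSpace α]
    [PseudoMetricSpace β] {K : Set α} (hK : IsCompact K) {f : α → β} (hf : Continuous f)
    {ε : ℝ} (hε : 0 < ε) : ∃ δ > 0, ∀ x ∈ K, ∀ y, dist x y < δ → dist (f x) (f y) < ε := by
  obtain ⟨δ, hδ, hsub⟩ := Metric.mem_uniformity_dist.1 <|
    hK.uniformContinuousAt_of_continuousAt f (fun x _ => hf.continuousAt)
      (Metric.dist_mem_uniformity hε)
  exact ⟨δ, hδ, fun x hx y hxy => hsub hxy hx⟩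

lemma le_of_forall_pos_le_add_mul {a b C : ℝ} (hab : ∀ ε > 0, a ≤ b + C * ε) : a ≤ b := by
  have hlim : Filter.Tendsto (fun ε => b + C * ε) (nhdsWithin 0 (Set.Ioi 0)) (nhds b) :=
    ((continuous_const.add (continuous_const.mul continuous_id)).tendsto' (0 : ℝ) b
      (by simp)).mono_left nhdsWithin_le_nhds
  exact ge_of_tendsto hlim (eventually_nhdsWithin_of_forall fun ε hε => hab ε hε)

section TotalVariation

variable {m n : ℕ} {h : (Fin m → ℝ) → ℝ}

lemma suppIn.vanishesOutside {F : MatMeas m n} {K : Set (Euc n)} (hFK : suppIn F K)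
    (i : Fin m) (j : Fin n) : VanishesOutside (F i j) K :=
  fun B hB hBK => hFK B hB hBK i j

lemma tsum_genNorm_le (hh : IsNorm h) (F : MatMeas m n) {B : ℕ → Set (Euc n)}
    (hB : IsBorelPartition B) :
    ∑' k, genNorm h (fun i j => F i j (B k)) ≤
      ∑ i, ∑ j, h (Pi.single i 1) * (F i j).totalVariation.real Set.univ := by
  have hsum : HasSum (fun k => ∑ i, ∑ j, h (Pi.single i 1) * (F i j).totalVariation.real (B k))
      (∑ i, ∑ j, h (Pi.single i 1) * (F i j).totalVariation.real Set.univ) :=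
    hasSum_sum fun i _ => hasSum_sum fun j _ => (hB.hasSum_measureReal _).mul_left _
  have hle : ∀ k, genNorm h (fun i j => F i j (B k)) ≤
      ∑ i, ∑ j, h (Pi.single i 1) * (F i j).totalVariation.real (B k) := fun k =>
    (genNorm_le_sum_abs hh _).trans <| Finset.sum_le_sum fun i _ => Finset.sum_le_sum fun j _ =>
      mul_le_mul_of_nonneg_left ((F i j).norm_le_totalVariation (B k)) (hh.nonneg _)
  rw [← hsum.tsum_eq]
  exact (hsum.summable.of_nonneg_of_le (fun k => genNorm_nonneg hh _) hle).tsum_le_tsum hle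
    hsum.summable

lemma le_tvH (hh : IsNorm h) (F : MatMeas m n) {B : ℕ → Set (Euc n)} (hB : IsBorelPartition B) :
    ∑' k, genNorm h (fun i j => F i j (B k)) ≤ tvH h F :=
  le_csSup ⟨_, by
      rintro _ ⟨B', hB'₁, hB'₂, hB'₃, rfl⟩
      exact tsum_genNorm_le hh F ⟨hB'₁, hB'₂, hB'₃⟩⟩
    ⟨B, hB.1, hB.2.1, hB.2.2, rfl⟩

lemma sum_sInt_le_tvH (hh : IsNorm h) {F : MatMeas m n} {K : Set (Euc n)} (hK : IsCompact K)
    (hFK : suppIn F K) {G : Euc n → Fin m → Fin n → ℝ} (hG : Continuous G)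
    (hGH : ∀ x, inSubdiffH h (G x)) :
    ∑ i, ∑ j, sInt (F i j) (fun x => G x i j) ≤ tvH h F := by
  refine le_of_forall_pos_le_add_mul (C := ∑ i, ∑ j, (F i j).totalVariation.real Set.univ)
    fun ε hε => ?_
  obtain ⟨δ, hδ, hGδ⟩ := hK.exists_pos_forall_dist_lt hG hε
  obtain ⟨c, B, N, hB, hBc, hBK⟩ := hK.exists_isBorelPartition_subset_ball hδ
  have hentry : ∀ i j k, ∀ x ∈ K ∩ B k, |G x i j - G (c k) i j| ≤ ε := fun i j k x hx => by
    have hGx := hGδ x hx.1 (c k) (Metric.mem_ball.1 (hBc k hx.2))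
    rw [← Real.dist_eq]
    exact ((dist_le_pi_dist _ _ j).trans (dist_le_pi_dist _ _ i)).trans hGx.le
  have hvanish : ∀ k, N ≤ k → genNorm h (fun i j => F i j (B k)) = 0 := fun k hk => by
    rw [show (fun i j => F i j (B k)) = 0 from
      funext₂ fun i j => hFK _ (hB.1 k) (hBK k hk) i j, genNorm_zero hh]
  calc ∑ i, ∑ j, sInt (F i j) (fun x => G x i j)
      ≤ ∑ i, ∑ j, (∑ k ∈ Finset.range N, G (c k) i j * F i j (B k) +
          ε * (F i j).totalVariation.real Set.univ) :=
        Finset.sum_le_sum fun i _ => Finset.sum_le_sum fun j _ =>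
          sInt_le_sum_add_of_isBorelPartition hK (hFK.vanishesOutside i j)
            ((continuous_apply j).comp ((continuous_apply i).comp hG)) hB hBK _ (hentry i j)
    _ = ∑ k ∈ Finset.range N, frob (G (c k)) (fun i j => F i j (B k)) +
          (∑ i, ∑ j, (F i j).totalVariation.real Set.univ) * ε := by
        simp only [frob, Finset.sum_add_distrib, Finset.sum_mul]
        congr 1
        · exact (Finset.sum_congr rfl fun i _ => Finset.sum_comm).trans Finset.sum_comm
        · simp_rw [mul_comm]
    _ ≤ ∑ k ∈ Finset.range N, genNorm h (fun i j => F i j (B k)) +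
          (∑ i, ∑ j, (F i j).totalVariation.real Set.univ) * ε := by
        gcongr with k
        exact frob_le_genNorm hh (hGH _) _
    _ ≤ tvH h F + (∑ i, ∑ j, (F i j).totalVariation.real Set.univ) * ε := by
        have htsum : ∑' k, genNorm h (fun i j => F i j (B k)) =
            ∑ k ∈ Finset.range N, genNorm h (fun i j => F i j (B k)) :=
          tsum_eq_sum fun k hk => hvanish k (not_lt.1 (Finset.mem_range.not.1 hk))
        rw [← htsum]
        gcongr
        exact le_tvH hh F hB

end TotalVariation

section Jacobian

variable {m n : ℕ} {h : (Fin m → ℝ) → ℝ}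

lemma matVec_jac (Φ : Euc n → Fin m → ℝ) (x u : Euc n) :
    matVec (jac Φ x) u = fderiv ℝ Φ x u := by
  conv_rhs => rw [← (EuclideanSpace.basisFun (Fin n) ℝ).sum_repr u]
  ext i
  simp [matVec, jac, mul_comm]

lemma continuous_jac {Φ : Euc n → Fin m → ℝ} {k : WithTop ℕ∞} (hΦ : ContDiff ℝ k Φ)
    (hk : k ≠ 0) : Continuous (jac Φ) :=
  continuous_pi fun i => continuous_pi fun j =>
    (continuous_apply i).comp ((hΦ.continuous_fderiv hk).clm_apply
      (continuous_const (y := EuclideanSpace.single j 1)))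

lemma inSubdiffH_jac_of_lipschitzWith {Φ : Euc n → Fin m → ℝ} (hΦ : Differentiable ℝ Φ)
    (hlip : ∀ θ, h θ ≤ 1 → LipschitzWith 1 fun x => Φ x ⬝ᵥ θ) (x : Euc n) :
    inSubdiffH h (jac Φ x) := by
  intro u hu
  rw [matVec_jac]
  refine dualNorm_le zero_le_one fun θ hθ => ?_
  let L : (Fin m → ℝ) →L[ℝ] ℝ := LinearMap.toContinuousLinearMap ((dotProductBilin ℝ ℝ).flip θ)
  have hL : HasFDerivAt (fun x => Φ x ⬝ᵥ θ) (L.comp (fderiv ℝ Φ x)) x :=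
    L.hasFDerivAt.comp x (hΦ x).hasFDerivAt
  calc fderiv ℝ Φ x u ⬝ᵥ θ = L.comp (fderiv ℝ Φ x) u := rfl
    _ ≤ ‖L.comp (fderiv ℝ Φ x)‖ * ‖u‖ := (le_abs_self _).trans ((L.comp _).le_opNorm u)
    _ ≤ 1 * 1 := mul_le_mul (by exact_mod_cast hL.le_of_lipschitz (hlip θ hθ)) hu
        (norm_nonneg _) zero_le_one
    _ = 1 := one_mul 1

end Jacobian

section Mollify

variable {n : ℕ} (ρ : ContDiffBump (0 : Euc n))

def mollify (f : Euc n → ℝ) : Euc n → ℝ :=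
  convolution (ρ.normed volume) f (ContinuousLinearMap.lsmul ℝ ℝ) volume

lemma mollify_apply (f : Euc n → ℝ) (x : Euc n) :
    mollify ρ f x = ∫ t, ρ.normed volume t * f (x - t) := by
  simp [mollify, convolution_def]

lemma integrable_mollify_integrand {f : Euc n → ℝ} (hf : Continuous f) (x : Euc n) :
    Integrable (fun t => ρ.normed volume t * f (x - t)) :=
  Continuous.integrable_of_hasCompactSupport
    (ρ.continuous_normed.mul (hf.comp (continuous_const.sub continuous_id)))
    ρ.hasCompactSupport_normed.mul_right

lemma contDiff_mollify {f : Euc n → ℝ} (hf : Continuous f) {k : ℕ∞} :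
    ContDiff ℝ k (mollify ρ f) :=
  ρ.hasCompactSupport_normed.contDiff_convolution_left _ ρ.contDiff_normed hf.locallyIntegrable

lemma lipschitzWith_mollify {K : NNReal} {f : Euc n → ℝ} (hf : LipschitzWith K f) :
    LipschitzWith K (mollify ρ f) := by
  refine LipschitzWith.of_dist_le_mul fun x y => ?_
  rw [Real.dist_eq, mollify_apply, mollify_apply, ← Real.norm_eq_abs,
    ← integral_sub (integrable_mollify_integrand ρ hf.continuous x)
      (integrable_mollify_integrand ρ hf.continuous y)]
  calc ‖∫ t, (ρ.normed volume t * f (x - t) - ρ.normed volume t * f (y - t))‖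
      ≤ ∫ t, ρ.normed volume t * (K * dist x y) := by
        refine norm_integral_le_of_norm_le (ρ.integrable_normed.mul_const _)
          (Filter.Eventually.of_forall fun t => ?_)
        rw [← mul_sub, norm_mul, Real.norm_of_nonneg (ρ.nonneg_normed t), ← dist_eq_norm,
          ← dist_sub_right x y t]
        exact mul_le_mul_of_nonneg_left (hf.dist_le_mul _ _) (ρ.nonneg_normed t)
    _ = K * dist x y := by rw [integral_mul_const, ρ.integral_normed, one_mul]

lemma dist_mollify_le {K : NNReal} {f : Euc n → ℝ} (hf : LipschitzWith K f)
    (x : Euc n) : dist (mollify ρ f x) (f x) ≤ K * ρ.rOut :=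
  ρ.dist_normed_convolution_le hf.continuous.aestronglyMeasurable fun y hy =>
    (hf.dist_le_mul y x).trans (by gcongr; exact (Metric.mem_ball.1 hy).le)

lemma mollify_dotProduct {m : ℕ} {f : Euc n → Fin m → ℝ} (hf : Continuous f) (θ : Fin m → ℝ)
    (x : Euc n) :
    mollify ρ (fun y => f y ⬝ᵥ θ) x = (fun i => mollify ρ (fun y => f y i) x) ⬝ᵥ θ := by
  have hfi : ∀ i, Continuous fun y => f y i := fun i => (continuous_apply i).comp hf
  simp only [mollify_apply, dotProduct, Finset.mul_sum, ← mul_assoc]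
  rw [integral_finsetSum _ fun i _ => (integrable_mollify_integrand ρ (hfi i) x).mul_const _]
  simp only [integral_mul_const]

end Mollify

section Admissible

variable {m n : ℕ} {h : (Fin m → ℝ) → ℝ} {φ : Euc n → Fin m → ℝ}

lemma admissible.lipschitzWith_dotProduct (hh : IsNorm h) (hφ : admissible h φ)
    (θ : Fin m → ℝ) : LipschitzWith (h θ).toNNReal fun x => φ x ⬝ᵥ θ :=
  LipschitzWith.of_dist_le_mul fun x y => by
    rw [Real.dist_eq, ← sub_dotProduct, Real.coe_toNNReal _ (hh.nonneg θ), dist_eq_norm]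
    exact (abs_dotProduct_le_mul_dualNorm hh _ θ).trans
      (mul_le_mul_of_nonneg_left (hφ y x) (hh.nonneg θ))

lemma admissible.lipschitzWith_apply (hh : IsNorm h) (hφ : admissible h φ) (i : Fin m) :
    LipschitzWith (h (Pi.single i 1)).toNNReal fun x => φ x i := by
  simpa [dotProduct_single] using hφ.lipschitzWith_dotProduct hh (Pi.single i 1)

lemma admissible.continuous (hh : IsNorm h) (hφ : admissible h φ) : Continuous φ :=
  continuous_pi fun i => (hφ.lipschitzWith_apply hh i).continuous

lemma admissible.exists_contDiff_approx (hh : IsNorm h) (hφ : admissible h φ) {ε : ℝ}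
    (hε : 0 < ε) :
    ∃ Φ : Euc n → Fin m → ℝ, ContDiff ℝ (⊤ : ℕ∞) Φ ∧
      (∀ x i, |φ x i - Φ x i| ≤ h (Pi.single i 1) * ε) ∧ ∀ x, inSubdiffH h (jac Φ x) := by
  let ρ : ContDiffBump (0 : Euc n) := ⟨ε / 2, ε, half_pos hε, half_lt_self hε⟩
  have hΦ : ContDiff ℝ (⊤ : ℕ∞) fun x i => mollify ρ (fun y => φ y i) x :=
    contDiff_pi.2 fun i => contDiff_mollify ρ (hφ.lipschitzWith_apply hh i).continuous
  refine ⟨_, hΦ, fun x i => ?_, inSubdiffH_jac_of_lipschitzWith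
    (hΦ.differentiable (by simp)) fun θ hθ => ?_⟩
  · rw [abs_sub_comm, ← Real.dist_eq]
    simpa [Real.coe_toNNReal _ (hh.nonneg _)] using
      dist_mollify_le ρ (hφ.lipschitzWith_apply hh i) x
  · simp_rw [← mollify_dotProduct ρ (hφ.continuous hh)]
    exact (lipschitzWith_mollify ρ (hφ.lipschitzWith_dotProduct hh θ)).weaken
      (Real.toNNReal_le_one.2 hθ)

end Admissible

lemma exists_contDiff_hasCompactSupport_eventuallyEq {E F : Type*} [NormedAddCommGroup E]
    [NormedSpace ℝ E] [FiniteDimensional ℝ E] [HasContDiffBump E] [NormedAddCommGroup F]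
    [NormedSpace ℝ F] {k : ℕ∞} {K : Set E} (hK : IsCompact K) {Φ : E → F}
    (hΦ : ContDiff ℝ k Φ) :
    ∃ ψ : E → F, ContDiff ℝ k ψ ∧ HasCompactSupport ψ ∧ ∀ x ∈ K, ψ =ᶠ[nhds x] Φ := by
  obtain ⟨R, hR, hKR⟩ := hK.isBounded.subset_ball_lt 0 0
  let χ : ContDiffBump (0 : E) := ⟨R, R + 1, hR, lt_add_one R⟩
  refine ⟨fun x => χ x • Φ x, χ.contDiff.smul hΦ, χ.hasCompactSupport.smul_right,
    fun x hx => ?_⟩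
  filter_upwards [χ.eventuallyEq_one_of_mem_ball (hKR hx)] with y hy
  simp [hy]

lemma intDual_le_add_of_abs_sub_le {m n : ℕ} {F0 : VecMeas m n} {K : Set (Euc n)}
    (hK : IsCompact K) (hF0 : ∀ i, VanishesOutside (F0 i) K) {φ ψ : Euc n → Fin m → ℝ}
    (hφ : Continuous φ) (hψ : Continuous ψ) {c : Fin m → ℝ}
    (hφψ : ∀ x ∈ K, ∀ i, |φ x i - ψ x i| ≤ c i) :
    intDual F0 φ ≤ intDual F0 ψ + ∑ i, c i * (F0 i).totalVariation.real Set.univ := by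
  rw [intDual, intDual, ← Finset.sum_add_distrib]
  refine Finset.sum_le_sum fun i _ => ?_
  have hae := (hF0 i).ae_mem hK.isClosed.measurableSet
  exact sInt_le_sInt_add (((continuous_apply i).comp hφ).integrable_of_ae_mem_compact hK hae)
    (((continuous_apply i).comp hψ).integrable_of_ae_mem_compact hK hae)
    (hae.mono fun x hx => hφψ x hx i)

theorem statement5_general {m n : ℕ}
    (h : (Fin m → ℝ) → ℝ) (hh : IsNorm h)
    (F : MatMeas m n) (hF : suppInCpt F)
    (F0 : VecMeas m n) (hF0 : vSuppInCpt F0)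
    (hb : isBoundary F F0)
    (φ : Euc n → Fin m → ℝ) (hφ : admissible h φ) :
    intDual F0 φ ≤ tvH h F := by
  obtain ⟨K, hK, hFK⟩ := hF
  obtain ⟨K₀, hK₀, hF0K₀⟩ := hF0
  have hvF0 : ∀ i, VanishesOutside (F0 i) K₀ := fun i B hB hBK => hF0K₀ B hB hBK i
  refine le_of_forall_pos_le_add_mul
    (C := ∑ i, h (Pi.single i 1) * (F0 i).totalVariation.real Set.univ) fun ε hε => ?_
  obtain ⟨Φ, hΦ, hφΦ, hDΦ⟩ := hφ.exists_contDiff_approx hh hε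
  obtain ⟨ψ, hψ, hψc, hψΦ⟩ := exists_contDiff_hasCompactSupport_eventuallyEq (hK.union hK₀) hΦ
  have hjac : ∀ i j, sInt (F i j) (fun x => jac ψ x i j) = sInt (F i j) (fun x => jac Φ x i j) :=
    fun i j => sInt_congr_ae <| ((hFK.vanishesOutside i j).ae_mem
      hK.isClosed.measurableSet).mono fun x hx => by
        simp only [jac, (hψΦ x (Or.inl hx)).fderiv_eq]
  calc intDual F0 φ
      ≤ intDual F0 ψ + ∑ i, h (Pi.single i 1) * ε * (F0 i).totalVariation.real Set.univ :=
        intDual_le_add_of_abs_sub_le hK₀ hvF0 (hφ.continuous hh) hψ.continuous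
          fun x hx i => (hψΦ x (Or.inr hx)).eq_of_nhds ▸ hφΦ x i
    _ = ∑ i, ∑ j, sInt (F i j) (fun x => jac Φ x i j) +
          (∑ i, h (Pi.single i 1) * (F0 i).totalVariation.real Set.univ) * ε := by
        rw [intDual, ← hb ψ hψ hψc, Finset.sum_mul]
        simp_rw [hjac, mul_right_comm _ ε]
    _ ≤ tvH h F + (∑ i, h (Pi.single i 1) * (F0 i).totalVariation.real Set.univ) * ε := by
        gcongr
        exact sum_sInt_le_tvH hh hK hFK (continuous_jac hΦ (by simp)) hDΦ

/-- weak duality: if `∂F = F₀` and `φ` is an admissible dual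
potential, then `∫ φ · dF₀ ≤ |F|_H`. -/
theorem statement5 {m n : ℕ} (hm : 0 < m) (hn : 0 < n)
    (h : (Fin m → ℝ) → ℝ) (hh : IsNorm h)
    (F : MatMeas m n) (hF : suppInCpt F)
    (F0 : VecMeas m n) (hF0 : vSuppInCpt F0)
    (hb : isBoundary F F0)
    (φ : Euc n → Fin m → ℝ) (hφ : admissible h φ) :
    intDual F0 φ ≤ tvH h F :=
  statement5_general h hh F hF F0 hF0 hb φ hφ
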